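/- arXiv:math/0311531 — 2 statements merged into one kernel-verified Lean document; each statement's English description precedes it below -/
import Mathlib

section
/- If ζ₀ ∉ hull(m) with witnessing sector S, and ζ₀ + u ∈ hull(m), then for every negative real multiple u' of u, the point ζ₀ + u' is not in hull(m). Concretely: if e^{-ζ₀t}m(t) decays like e^{-ε|t|} on a sector S and this fails for ζ₀+u on every subsector of S, then Re(u t) ≤ 0 for all directions t in S, hence for u' = -λu with λ > 0, e^{-(ζ₀+u')t}m(t) is rapidly decreasing on S. -/
open Complex

/-- `f` is rapidly decreasing in some open sector of directions going to infinity. -/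
def RapidlyDecreasingInASector (f : ℂ → ℂ) : Prop :=
  ∃ θ₁ θ₂ : ℝ, θ₁ < θ₂ ∧ ∃ ε > (0 : ℝ), ∃ R : ℝ, ∀ s θ : ℝ,
    R ≤ s → θ₁ < θ → θ < θ₂ →
      ‖f ((s : ℂ) * Complex.exp ((θ : ℂ) * Complex.I))‖ ≤ Real.exp (-ε * s)

/-- The hull of `m`. -/
def hullSet (m : ℂ → ℂ) : Set ℂ :=
  {ζ : ℂ | ¬ RapidlyDecreasingInASector (fun t => Complex.exp (-ζ * t) * m t)}

/-! A direction `θ` with `Re (u e^{iθ}) > 0` would give, by continuity, a subsector on which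
`e^{-u t}` is bounded by `1`, so `e^{-(ζ₀ + u) t} m(t)` would inherit the decay of
`e^{-ζ₀ t} m(t)` there and `ζ₀ + u` could not lie in the hull. Hence `Re (u t) ≤ 0` on the
sector, i.e. `Re (-λ u t) ≥ 0`, and the same argument on the whole sector shows
`ζ₀ - λ u ∉ hull(m)`. -/

lemma norm_exp_neg_mul_mul_le {c t : ℂ} (h : 0 ≤ (c * t).re) (z : ℂ) :
    ‖exp (-c * t) * z‖ ≤ ‖z‖ := by
  rw [norm_mul, norm_exp, neg_mul, neg_re]
  exact mul_le_of_le_one_left (norm_nonneg z) (Real.exp_le_one_iff.2 (neg_nonpos.2 h))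

section Decay

variable {m : ℂ → ℂ} {ζ₀ : ℂ} {θ₁ θ₂ ε R : ℝ}

lemma add_notMem_hullSet_of_re_nonneg (hε : 0 < ε)
    (hdecay : ∀ s θ : ℝ, R ≤ s → θ₁ < θ → θ < θ₂ →
      ‖exp (-ζ₀ * ((s : ℂ) * exp ((θ : ℂ) * I))) *
        m ((s : ℂ) * exp ((θ : ℂ) * I))‖ ≤ Real.exp (-ε * s))
    {c : ℂ} {α β : ℝ} (hαβ : α < β) (hsub : Set.Ioo α β ⊆ Set.Ioo θ₁ θ₂)
    (hc : ∀ θ ∈ Set.Ioo α β, 0 ≤ (c * exp ((θ : ℂ) * I)).re) :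
    ζ₀ + c ∉ hullSet m := by
  refine not_not.2 ⟨α, β, hαβ, ε, hε, max R 0, fun s θ hs hα hβ => ?_⟩
  have hθ : θ ∈ Set.Ioo α β := ⟨hα, hβ⟩
  obtain ⟨hθ₁, hθ₂⟩ := hsub hθ
  have hre : 0 ≤ (c * ((s : ℂ) * exp ((θ : ℂ) * I))).re := by
    rw [mul_left_comm, re_ofReal_mul]
    exact mul_nonneg (le_of_max_le_right hs) (hc θ hθ)
  calc _ = ‖exp (-c * ((s : ℂ) * exp ((θ : ℂ) * I))) *
          (exp (-ζ₀ * ((s : ℂ) * exp ((θ : ℂ) * I))) * m ((s : ℂ) * exp ((θ : ℂ) * I)))‖ := by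
        rw [← mul_assoc, ← Complex.exp_add, ← add_mul, neg_add_rev]
    _ ≤ _ := norm_exp_neg_mul_mul_le hre _
    _ ≤ Real.exp (-ε * s) := hdecay s θ (le_of_max_le_left hs) hθ₁ hθ₂

lemma re_mul_exp_nonpos_of_add_mem_hullSet (hε : 0 < ε)
    (hdecay : ∀ s θ : ℝ, R ≤ s → θ₁ < θ → θ < θ₂ →
      ‖exp (-ζ₀ * ((s : ℂ) * exp ((θ : ℂ) * I))) *
        m ((s : ℂ) * exp ((θ : ℂ) * I))‖ ≤ Real.exp (-ε * s))
    {u : ℂ} (hu : ζ₀ + u ∈ hullSet m) {θ : ℝ} (hθ : θ ∈ Set.Ioo θ₁ θ₂) :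
    (u * exp ((θ : ℂ) * I)).re ≤ 0 := by
  by_contra! hpos
  have hopen : IsOpen ({φ : ℝ | 0 < (u * exp ((φ : ℂ) * I)).re} ∩ Set.Ioo θ₁ θ₂) :=
    (isOpen_lt continuous_const (by fun_prop)).inter isOpen_Ioo
  obtain ⟨α, β, hθαβ, hsub⟩ :=
    mem_nhds_iff_exists_Ioo_subset.1 (hopen.mem_nhds ⟨hpos, hθ⟩)
  exact add_notMem_hullSet_of_re_nonneg hε hdecay (hθαβ.1.trans hθαβ.2)
    (hsub.trans Set.inter_subset_right) (fun φ hφ => (hsub hφ).1.le) hu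

end Decay

theorem hull_negative_multiple_general (m : ℂ → ℂ)
    (ζ₀ u : ℂ) (θ₁ θ₂ : ℝ) (hθ : θ₁ < θ₂) (ε : ℝ) (hε : 0 < ε) (R : ℝ)
    (hdecay : ∀ s θ : ℝ, R ≤ s → θ₁ < θ → θ < θ₂ →
      ‖Complex.exp (-ζ₀ * ((s : ℂ) * Complex.exp ((θ : ℂ) * Complex.I))) *
        m ((s : ℂ) * Complex.exp ((θ : ℂ) * Complex.I))‖ ≤ Real.exp (-ε * s))
    (hu : ζ₀ + u ∈ hullSet m) :
    (∀ θ : ℝ, θ₁ < θ → θ < θ₂ → (u * Complex.exp ((θ : ℂ) * Complex.I)).re ≤ 0) ∧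
    ∀ lam : ℝ, 0 < lam → ζ₀ - (lam : ℂ) * u ∉ hullSet m := by
  have hre (θ : ℝ) (hθ : θ ∈ Set.Ioo θ₁ θ₂) : (u * exp ((θ : ℂ) * I)).re ≤ 0 :=
    re_mul_exp_nonpos_of_add_mem_hullSet hε hdecay hu hθ
  refine ⟨fun θ h₁ h₂ => hre θ ⟨h₁, h₂⟩, fun lam hlam => ?_⟩
  rw [sub_eq_add_neg, ← neg_mul]
  refine add_notMem_hullSet_of_re_nonneg hε hdecay hθ subset_rfl fun θ hθ => ?_
  rw [← ofReal_neg, mul_assoc, re_ofReal_mul]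
  exact mul_nonneg_of_nonpos_of_nonpos (neg_nonpos.2 hlam.le) (hre θ hθ)

/-- If `e^{-ζ₀ t} m(t)` decays like `e^{-ε|t|}` on a sector `S = (θ₁,θ₂)` while
`ζ₀ + u` belongs to the hull of `m` (no sector of rapid decrease at all), then
`Re (u·t) ≤ 0` for all directions `t` in `S`, and consequently for every negative
real multiple `u' = -λ u` (λ > 0) the point `ζ₀ + u' = ζ₀ - λu` is not in the hull:
`e^{-(ζ₀+u')t} m(t)` is rapidly decreasing (on the sector `S`). -/
theorem hull_negative_multiple (m : ℂ → ℂ) (hm : Differentiable ℂ m) (C a : ℝ)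
    (hC : 0 < C) (ha : 0 < a)
    (hbound : ∀ t : ℂ, ‖m t‖ ≤ C * Real.exp (a * ‖t‖))
    (ζ₀ u : ℂ) (θ₁ θ₂ : ℝ) (hθ : θ₁ < θ₂) (ε : ℝ) (hε : 0 < ε) (R : ℝ)
    (hdecay : ∀ s θ : ℝ, R ≤ s → θ₁ < θ → θ < θ₂ →
      ‖Complex.exp (-ζ₀ * ((s : ℂ) * Complex.exp ((θ : ℂ) * Complex.I))) *
        m ((s : ℂ) * Complex.exp ((θ : ℂ) * Complex.I))‖ ≤ Real.exp (-ε * s))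
    (hu : ζ₀ + u ∈ hullSet m) :
    (∀ θ : ℝ, θ₁ < θ → θ < θ₂ → (u * Complex.exp ((θ : ℂ) * Complex.I)).re ≤ 0) ∧
    ∀ lam : ℝ, 0 < lam → ζ₀ - (lam : ℂ) * u ∉ hullSet m :=
  hull_negative_multiple_general m ζ₀ u θ₁ θ₂ hθ ε hε R hdecay hu
end

section
/- In ℝ², let w = u + v with w ingoing and not steep (w₂ > 0 and |w₂/w₁| ≤ A). If v is steep and ingoing (v₂ > A|v₁|), then u satisfies: either u is outgoing (u₂ ≤ 0), or u has the same horizontal direction as w (sign(u₁) = sign(w₁)) and signed slope (sign w₁)·(u₂/u₁) ≤ (sign w₁)·(w₂/w₁). In words: subtracting a steep ingoing vector from an ingoing non-steep vector either makes it outgoing, or keeps the direction and decreases the slope. -/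
/-- Plane-geometry lemma for the additive relation: if `w = u + v` is ingoing
(`w₂ > 0`) and not steep (`|w₂/w₁| ≤ A`, `w₁ ≠ 0`) while `v` is steep and ingoing
(`v₂ > A|v₁|`), then either `u` is outgoing (`u₂ ≤ 0`), or `u` has the same
horizontal direction as `w` and its signed slope does not exceed that of `w`. -/
theorem subtract_steep_ingoing (A : ℝ) (hA : 0 < A) (w u v : ℝ × ℝ)
    (hw : w = u + v) (hw2 : 0 < w.2) (hw1 : w.1 ≠ 0) (hns : |w.2 / w.1| ≤ A)
    (hv : A * |v.1| < v.2) :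
    u.2 ≤ 0 ∨
      (Real.sign u.1 = Real.sign w.1 ∧
        Real.sign w.1 * (u.2 / u.1) ≤ Real.sign w.1 * (w.2 / w.1)) := by
  by_cases hu2 : u.2 ≤ 0
  · exact Or.inl hu2
  push_neg at hu2
  right
  have h1 : w.1 = u.1 + v.1 := by rw [hw]; rfl
  have h2 : w.2 = u.2 + v.2 := by rw [hw]; rfl
  have hv1 : 0 ≤ A * |v.1| := mul_nonneg hA.le (abs_nonneg _)
  have hv2 : 0 < v.2 := lt_of_le_of_lt hv1 hv
  have hvv : A * v.1 < v.2 ∧ A * (-v.1) < v.2 := by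
    rcases abs_cases v.1 with ⟨hav, _⟩ | ⟨hav, _⟩ <;>
      constructor <;> nlinarith [hav ▸ hv, abs_nonneg v.1, le_abs_self v.1,
        neg_abs_le v.1]
  obtain ⟨hvp, hvn⟩ := hvv
  rcases hw1.lt_or_gt with hw1' | hw1'
  · -- w.1 < 0
    have hs : Real.sign w.1 = -1 := Real.sign_of_neg hw1'
    have hns' : -A ≤ w.2 / w.1 := (abs_le.mp hns).1
    have hkey : w.2 ≤ -(A * w.1) := by
      have hmul := mul_le_mul_of_nonpos_right hns' hw1'.le
      rw [div_mul_cancel₀ w.2 (ne_of_lt hw1')] at hmul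
      linarith
    have hu1 : u.1 < 0 := by
      by_contra h
      push_neg at h
      nlinarith [mul_nonneg hA.le h]
    refine ⟨by rw [hs, Real.sign_of_neg hu1], ?_⟩
    rw [hs]
    have hdiv : w.2 / w.1 ≤ u.2 / u.1 := by
      rw [show w.2 / w.1 = -w.2 / -w.1 by rw [neg_div_neg_eq],
        show u.2 / u.1 = -u.2 / -u.1 by rw [neg_div_neg_eq],
        div_le_div_iff₀ (neg_pos.mpr hw1') (neg_pos.mpr hu1)]
      rcases le_or_gt 0 v.1 with h | h
      · nlinarith [mul_nonneg hA.le h, mul_pos hv2 (neg_pos.mpr hw1')]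
      · nlinarith [mul_lt_mul_of_pos_right hvn (neg_pos.mpr hw1'),
          mul_le_mul_of_nonpos_right hkey h.le]
    linarith
  · -- w.1 > 0
    have hs : Real.sign w.1 = 1 := Real.sign_of_pos hw1'
    have hns' : w.2 / w.1 ≤ A := (abs_le.mp hns).2
    have hkey : w.2 ≤ A * w.1 := by
      have := (div_le_iff₀ hw1').mp hns'
      linarith
    have hu1 : 0 < u.1 := by
      by_contra h
      push_neg at h
      nlinarith [mul_nonpos_of_nonneg_of_nonpos hA.le h]
    refine ⟨by rw [hs, Real.sign_of_pos hu1], ?_⟩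
    rw [hs]
    have hdiv : u.2 / u.1 ≤ w.2 / w.1 := by
      rw [div_le_div_iff₀ hu1 hw1']
      rcases le_or_gt 0 v.1 with h | h
      · nlinarith [mul_lt_mul_of_pos_right hvp hw1', mul_le_mul_of_nonneg_right hkey h]
      · nlinarith [mul_pos hv2 hw1', mul_nonpos_of_nonneg_of_nonpos hw2.le h.le]
    linarith
end
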